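/- arXiv:1901.03858 — 6 statements merged into one kernel-verified Lean document; each statement's English description precedes it below -/
import Mathlib

section
/- For positive invertible operators A and B on a Hilbert space, the parallel sum A:B = (A^{-1} + B^{-1})^{-1} satisfies A:B ≤ t²·A + (1-t)²·B for every real number t. -/
/-!
Since `A⁻¹ + B⁻¹ = A⁻¹ (A + B) B⁻¹`, the parallel sum is `S = A T B` with `T = (A + B)⁻¹`.
Because `T` inverts `A + B` we also have `B T A = S`, `A T A = A - S` and `B T B = B - S`, whence
`t² A + (1 - t)² B - S = C T C` for the self-adjoint `C = t A - (1 - t) B`; this is positive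
because `T` is.
-/

section Ring

variable {R : Type*} [Ring R] {a b t : R}

theorem add_eq_mul_add_mul_of_mul_eq_one {a' b' : R} (hb : b * b' = 1) (ha : a' * a = 1) :
    a + b = b * (a' + b') * a := by
  rw [mul_add, add_mul, mul_assoc, ha, mul_one, hb, one_mul, add_comm]

theorem mul_mul_self_eq_sub_of_inverse_add (h : t * (a + b) = 1) :
    a * t * a = a - a * t * b := by
  rw [eq_sub_iff_add_eq, ← mul_add, mul_assoc, h, mul_one]

theorem mul_mul_comm_of_inverse_add (h₁ : (a + b) * t = 1) (h₂ : t * (a + b) = 1) :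
    b * t * a = a * t * b := by
  have hba : b * t * a = a - a * t * a := by
    rw [eq_sub_iff_add_eq, ← add_mul, ← add_mul, add_comm b a, h₁, one_mul]
  rw [hba, mul_mul_self_eq_sub_of_inverse_add h₂, sub_sub_cancel]

theorem smul_sub_smul_mul_mul_smul_sub_smul_of_inverse_add {k : Type*} [CommRing k]
    [Algebra k R] (h₁ : (a + b) * t = 1) (h₂ : t * (a + b) = 1) (c d : k) :
    (c • a - d • b) * t * (c • a - d • b) =
      c ^ 2 • a + d ^ 2 • b - (c + d) ^ 2 • (a * t * b) := by
  have hba := mul_mul_comm_of_inverse_add h₁ h₂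
  have haa := mul_mul_self_eq_sub_of_inverse_add h₂
  have hbb : b * t * b = b - a * t * b := by
    rw [← hba]
    exact mul_mul_self_eq_sub_of_inverse_add (add_comm a b ▸ h₂)
  simp only [sub_mul, mul_sub, smul_mul_assoc, mul_smul_comm, haa, hba, hbb]
  module

end Ring

section StarOrderedRing

variable {R : Type*} [Ring R] [StarRing R] [PartialOrder R] [StarOrderedRing R] [Algebra ℝ R]
  [StarModule ℝ R] {a b t : R}

theorem mul_mul_le_sq_smul_add_sq_smul_of_inverse_add (ha : IsSelfAdjoint a)
    (hb : IsSelfAdjoint b) (h₁ : (a + b) * t = 1) (h₂ : t * (a + b) = 1) (ht : 0 ≤ t) (c : ℝ) :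
    a * t * b ≤ c ^ 2 • a + (1 - c) ^ 2 • b := by
  have hC : IsSelfAdjoint (c • a - (1 - c) • b) :=
    ((IsSelfAdjoint.all c).smul ha).sub ((IsSelfAdjoint.all (1 - c)).smul hb)
  have key := smul_sub_smul_mul_mul_smul_sub_smul_of_inverse_add h₁ h₂ c (1 - c)
  rw [add_sub_cancel, one_pow, one_smul] at key
  rw [← sub_nonneg, ← key]
  exact hC.conjugate_nonneg ht

end StarOrderedRing

theorem CStarAlgebra.mul_inv_mul_le_sq_smul_add_sq_smul {A : Type*} [CStarAlgebra A]
    [PartialOrder A] [StarOrderedRing A] {a b : A} (ha : 0 ≤ a) (hb : 0 ≤ b) (u : Aˣ)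
    (hu : (u : A) = a + b) (c : ℝ) :
    a * ↑u⁻¹ * b ≤ c ^ 2 • a + (1 - c) ^ 2 • b :=
  mul_mul_le_sq_smul_add_sq_smul_of_inverse_add ha.isSelfAdjoint hb.isSelfAdjoint
    (hu ▸ u.mul_inv) (hu ▸ u.inv_mul) (CFC.inv_nonneg_of_nonneg u (hu ▸ add_nonneg ha hb)) c

/-- For positive invertible operators `A` and `B` on a complex Hilbert space, the
parallel sum `A : B = (A⁻¹ + B⁻¹)⁻¹` (here given via two-sided inverses `A'`, `B'`
of `A`, `B` and a two-sided inverse `S` of `A' + B'`) satisfies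
`A : B ≤ t² • A + (1 - t)² • B` for every real `t`, in the Loewner order. -/
theorem parallel_sum_le_sq_combination
    (E : Type*) [NormedAddCommGroup E] [InnerProductSpace ℂ E] [CompleteSpace E]
    (A B A' B' S : E →L[ℂ] E)
    (hA : A.IsPositive) (hB : B.IsPositive)
    (hAA' : A * A' = 1) (hA'A : A' * A = 1)
    (hBB' : B * B' = 1) (hB'B : B' * B = 1)
    (hS : S * (A' + B') = 1) (hS' : (A' + B') * S = 1) :
    ∀ t : ℝ, (t ^ 2 • A + (1 - t) ^ 2 • B - S).IsPositive := by
  intro t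
  let uA : (E →L[ℂ] E)ˣ := ⟨A, A', hAA', hA'A⟩
  let uB : (E →L[ℂ] E)ˣ := ⟨B, B', hBB', hB'B⟩
  let uS : (E →L[ℂ] E)ˣ := ⟨A' + B', S, hS', hS⟩
  have hsum : ((uB * uS * uA : (E →L[ℂ] E)ˣ) : E →L[ℂ] E) = A + B :=
    (add_eq_mul_add_mul_of_mul_eq_one hBB' hA'A).symm
  have hpar : A * ↑(uB * uS * uA)⁻¹ * B = S := by
    simp only [mul_inv_rev, Units.val_mul, Units.inv_mk, uA, uB, uS, ← mul_assoc, hAA', one_mul]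
    rw [mul_assoc, hB'B, mul_one]
  rw [← ContinuousLinearMap.nonneg_iff_isPositive, sub_nonneg, ← hpar]
  exact CStarAlgebra.mul_inv_mul_le_sq_smul_add_sq_smul
    ((ContinuousLinearMap.nonneg_iff_isPositive A).mpr hA)
    ((ContinuousLinearMap.nonneg_iff_isPositive B).mpr hB) _ hsum t
end

section
/- If |||·||| is a monotone norm on the bounded operators of a finite-dimensional Hilbert space (i.e., 0 ≤ B ≤ A implies |||B||| ≤ |||A|||), then for positive invertible A, B, the parallel sum satisfies |||A:B||| ≤ |||A||| : |||B|||, where on the right-hand side the parallel sum of positive real numbers is a:b = (a^{-1}+b^{-1})^{-1} = ab/(a+b). -/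
/-!
With `C = (A + B)⁻¹` and `D = t • A - (1 - t) • B`, the identities `A C A = A - A:B`,
`A C B = B C A = A:B` and `B C B = B - A:B` give `D C D = t² A + (1 - t)² B - A:B`, so
`A:B ≤ t² A + (1 - t)² B` in the Loewner order for every real `t`. Monotonicity and the
triangle inequality then bound `|||A:B|||` by `t² a + (1 - t)² b` with `a = |||A|||` and
`b = |||B|||`, and `t = b / (a + b)` makes this `a:b`.
-/

open scoped ComplexOrder

theorem exists_sq_mul_add_one_sub_sq_mul_eq {a b : ℝ} (ha : 0 ≤ a) (hb : 0 ≤ b) :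
    ∃ t : ℝ, t ^ 2 * a + (1 - t) ^ 2 * b = a * b / (a + b) := by
  rcases (add_nonneg ha hb).eq_or_lt with hab | hab
  · obtain ⟨rfl, rfl⟩ := (add_eq_zero_iff_of_nonneg ha hb).mp hab.symm
    exact ⟨0, by simp⟩
  · refine ⟨b / (a + b), ?_⟩
    field_simp
    ring

theorem apply_smul_add_smul_le {K E : Type*} [RCLike K] [AddCommGroup E] [Module K E]
    [Module ℝ E] [IsScalarTower ℝ K E] {ν : E → ℝ} (htri : ∀ x y, ν (x + y) ≤ ν x + ν y)
    (hhom : ∀ (c : K) x, ν (c • x) = ‖c‖ * ν x) {r s : ℝ} (hr : 0 ≤ r) (hs : 0 ≤ s) (x y : E) :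
    ν (r • x + s • y) ≤ r * ν x + s * ν y := by
  have hreal : ∀ (c : ℝ) x, 0 ≤ c → ν (c • x) = c * ν x := fun c x hc => by
    rw [RCLike.real_smul_eq_coe_smul (K := K), hhom, RCLike.norm_ofReal, abs_of_nonneg hc]
  exact (htri _ _).trans_eq (by rw [hreal r x hr, hreal s y hs])

namespace Matrix

open scoped MatrixOrder

variable {n : Type*} [Fintype n] [DecidableEq n]

theorem inv_add_inv_inv_eq {R : Type*} [CommRing R] {A B : Matrix n n R}
    (hA : IsUnit A.det) (hB : IsUnit B.det) : (A⁻¹ + B⁻¹)⁻¹ = B * (A + B)⁻¹ * A := by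
  have h : A⁻¹ + B⁻¹ = A⁻¹ * (A + B) * B⁻¹ := by
    rw [Matrix.mul_add, Matrix.add_mul, nonsing_inv_mul _ hA, Matrix.mul_assoc,
      mul_nonsing_inv _ hB, Matrix.one_mul, Matrix.mul_one, add_comm]
  rw [h, mul_inv_rev, mul_inv_rev, nonsing_inv_nonsing_inv _ hA,
    nonsing_inv_nonsing_inv _ hB, Matrix.mul_assoc]

theorem PosDef.inv_add_inv_inv_le {𝕜 : Type*} [RCLike 𝕜] {A B : Matrix n n 𝕜}
    (hA : A.PosDef) (hB : B.PosDef) (t : ℝ) :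
    (A⁻¹ + B⁻¹)⁻¹ ≤ t ^ 2 • A + (1 - t) ^ 2 • B := by
  have hAB : IsUnit (A + B).det := (isUnit_iff_isUnit_det _).mp (hA.add hB).isUnit
  set C := (A + B)⁻¹
  set P := B * C * A
  have hACA : A * C * A = A - P := by
    refine eq_sub_of_add_eq ?_
    rw [← Matrix.add_mul, ← Matrix.add_mul, mul_nonsing_inv _ hAB, Matrix.one_mul]
  have hACB : A * C * B = P := by
    have h : A * C * A + A * C * B = A := by
      rw [← Matrix.mul_add, Matrix.mul_assoc, nonsing_inv_mul _ hAB, Matrix.mul_one]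
    rw [hACA] at h
    simpa using congrArg (· - (A - P)) h
  have hBCB : B * C * B = B - P := by
    refine eq_sub_of_add_eq' ?_
    rw [← Matrix.mul_add, Matrix.mul_assoc, nonsing_inv_mul _ hAB, Matrix.mul_one]
  set D := t • A - (1 - t) • B
  have hD : Dᴴ = D := by
    simp [D, conjTranspose_smul, hA.1.eq, hB.1.eq]
  have hDCD : D * C * D = t ^ 2 • A + (1 - t) ^ 2 • B - P := by
    simp only [D, sub_mul, mul_sub, smul_mul_assoc, mul_smul_comm, hACA, hACB, hBCB]
    module
  rw [le_iff, inv_add_inv_inv_eq ((isUnit_iff_isUnit_det _).mp hA.isUnit)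
    ((isUnit_iff_isUnit_det _).mp hB.isUnit), ← hDCD]
  simpa only [hD] using (hA.add hB).inv.posSemidef.conjTranspose_mul_mul_same D

end Matrix

theorem monotone_norm_parallel_sum_general
    (N : ℕ) (ν : Matrix (Fin N) (Fin N) ℂ → ℝ)
    (htri : ∀ X Y, ν (X + Y) ≤ ν X + ν Y)
    (hhom : ∀ (c : ℂ) (X), ν (c • X) = ‖c‖ * ν X)
    (hmono : ∀ X Y : Matrix (Fin N) (Fin N) ℂ,
      Y.PosSemidef → (X - Y).PosSemidef → ν Y ≤ ν X)
    (A B : Matrix (Fin N) (Fin N) ℂ) (hA : A.PosDef) (hB : B.PosDef) :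
    ν ((A⁻¹ + B⁻¹)⁻¹) ≤ ν A * ν B / (ν A + ν B) := by
  have hν0 : ν 0 = 0 := by simpa using hhom 0 0
  have hνnonneg : ∀ X, X.PosSemidef → 0 ≤ ν X := fun X hX =>
    hν0 ▸ hmono X 0 .zero (by simpa using hX)
  obtain ⟨t, ht⟩ := exists_sq_mul_add_one_sub_sq_mul_eq
    (hνnonneg A hA.posSemidef) (hνnonneg B hB.posSemidef)
  calc ν ((A⁻¹ + B⁻¹)⁻¹)
      ≤ ν (t ^ 2 • A + (1 - t) ^ 2 • B) :=
        hmono _ _ (hA.inv.add hB.inv).inv.posSemidef (hA.inv_add_inv_inv_le hB t)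
    _ ≤ t ^ 2 * ν A + (1 - t) ^ 2 * ν B :=
        apply_smul_add_smul_le htri hhom (sq_nonneg _) (sq_nonneg _) A B
    _ = ν A * ν B / (ν A + ν B) := ht

/-- If `ν` is a monotone norm on the `N × N` complex matrices (viewed as operators on a
finite-dimensional Hilbert space), i.e. a norm such that `0 ≤ B ≤ A` implies `ν B ≤ ν A`,
then for positive definite `A`, `B` the parallel sum satisfies
`ν ((A⁻¹ + B⁻¹)⁻¹) ≤ ν A * ν B / (ν A + ν B)`, the right-hand side being the parallel
sum of the positive reals `ν A` and `ν B`. -/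
theorem monotone_norm_parallel_sum
    (N : ℕ) (ν : Matrix (Fin N) (Fin N) ℂ → ℝ)
    (hdef : ∀ X, ν X = 0 → X = 0)
    (htri : ∀ X Y, ν (X + Y) ≤ ν X + ν Y)
    (hhom : ∀ (c : ℂ) (X), ν (c • X) = ‖c‖ * ν X)
    (hmono : ∀ X Y : Matrix (Fin N) (Fin N) ℂ,
      Y.PosSemidef → (X - Y).PosSemidef → ν Y ≤ ν X)
    (A B : Matrix (Fin N) (Fin N) ℂ) (hA : A.PosDef) (hB : B.PosDef) :
    ν ((A⁻¹ + B⁻¹)⁻¹) ≤ ν A * ν B / (ν A + ν B) :=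
  monotone_norm_parallel_sum_general N ν htri hhom hmono A B hA hB
end

section
/- The function δ_T(μ, ν) := inf { r ≥ 0 : e^{-r}.ν ≤ μ ≤ e^{r}.ν } satisfies the triangle inequality: δ_T(μ, λ) ≤ δ_T(μ, ν) + δ_T(ν, λ) for probability measures μ, ν, λ with bounded support on an open convex cone, where α.ν denotes the push-forward of ν under scalar multiplication by α and ≤ is the stochastic order. -/
open MeasureTheory Real

variable {E : Type*} [NormedAddCommGroup E] [NormedSpace ℝ E]
  [MeasurableSpace E] [BorelSpace E]

/-- The partial order induced by the closure of the cone `C`: `x ≤ y` iff `y - x ∈ closure C`. -/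
def coneLE (C : Set E) (x y : E) : Prop := y - x ∈ closure C

/-- The stochastic order on (probability) measures: `μ ≤ ν` iff `μ U ≤ ν U` for every
upper closed set `U` (with respect to the cone order). -/
def stochLE (C : Set E) (μ ν : Measure E) : Prop :=
  ∀ U : Set E, IsClosed U → (∀ ⦃x⦄, x ∈ U → ∀ ⦃y⦄, coneLE C x y → y ∈ U) → μ U ≤ ν U

/-- The push-forward of `μ` by scalar multiplication with `α`. -/
noncomputable def scaleM (α : ℝ) (μ : Measure E) : Measure E := μ.map (α • ·)

/-- The set of `r ≥ 0` with `e^{-r}.ν ≤ μ ≤ e^r.ν` in the stochastic order. -/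
def thompsonSet (C : Set E) (μ ν : Measure E) : Set ℝ :=
  {r : ℝ | 0 ≤ r ∧ stochLE C (scaleM (exp (-r)) ν) μ ∧ stochLE C μ (scaleM (exp r) ν)}

/-- The Thompson-metric-like function `δ_T` on measures. -/
noncomputable def deltaT (C : Set E) (μ ν : Measure E) : ℝ := sInf (thompsonSet C μ ν)

section Aux

variable {E : Type*} [NormedAddCommGroup E] [NormedSpace ℝ E]
  [MeasurableSpace E] [BorelSpace E]

lemma closure_smul_mem {C : Set E} (hCcone : ∀ x ∈ C, ∀ r : ℝ, 0 < r → r • x ∈ C)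
    {α : ℝ} (hα : 0 < α) {z : E} (hz : z ∈ closure C) : α • z ∈ closure C := by
  have h1 : (α • ·) '' closure C ⊆ closure ((α • ·) '' C) :=
    image_closure_subset_closure_image (continuous_const_smul α)
  have h2 : (α • ·) '' C ⊆ C := by
    rintro _ ⟨x, hx, rfl⟩; exact hCcone x hx α hα
  exact closure_mono h2 (h1 ⟨z, hz, rfl⟩)

lemma stochLE_trans {C : Set E} {μ ν lam : MeasureTheory.Measure E}
    (h1 : stochLE C μ ν) (h2 : stochLE C ν lam) : stochLE C μ lam :=
  fun U hU hup => (h1 U hU hup).trans (h2 U hU hup)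

lemma stochLE_scale {C : Set E} (hCcone : ∀ x ∈ C, ∀ r : ℝ, 0 < r → r • x ∈ C)
    {α : ℝ} (hα : 0 < α) {μ ν : MeasureTheory.Measure E}
    (h : stochLE C μ ν) : stochLE C (scaleM α μ) (scaleM α ν) := by
  intro U hU hup
  have hm : Measurable (α • · : E → E) := (continuous_const_smul α).measurable
  rw [scaleM, scaleM, MeasureTheory.Measure.map_apply hm hU.measurableSet,
    MeasureTheory.Measure.map_apply hm hU.measurableSet]
  refine h _ (hU.preimage (continuous_const_smul α)) ?_
  intro x hx y hxy
  have : coneLE C (α • x) (α • y) := by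
    have := closure_smul_mem hCcone hα hxy
    rwa [coneLE, ← smul_sub]
  exact hup hx this

lemma scaleM_scaleM {α β : ℝ} (μ : MeasureTheory.Measure E) :
    scaleM α (scaleM β μ) = scaleM (α * β) μ := by
  rw [scaleM, scaleM, scaleM,
    MeasureTheory.Measure.map_map (continuous_const_smul α).measurable
      (continuous_const_smul β).measurable]
  congr 1
  funext x
  simp [Function.comp, smul_smul]

lemma thompsonSet_add {C : Set E} (hCcone : ∀ x ∈ C, ∀ r : ℝ, 0 < r → r • x ∈ C)
    {μ ν lam : MeasureTheory.Measure E} {r t : ℝ}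
    (hr : r ∈ thompsonSet C μ ν) (ht : t ∈ thompsonSet C ν lam) :
    r + t ∈ thompsonSet C μ lam := by
  obtain ⟨hr0, hrl, hru⟩ := hr
  obtain ⟨ht0, htl, htu⟩ := ht
  refine ⟨by linarith, ?_, ?_⟩
  · -- scaleM (exp (-(r+t))) lam ≤ ν scaled ≤ μ
    have h1 : stochLE C (scaleM (Real.exp (-r)) (scaleM (Real.exp (-t)) lam))
        (scaleM (Real.exp (-r)) ν) := stochLE_scale hCcone (Real.exp_pos _) htl
    rw [scaleM_scaleM, ← Real.exp_add] at h1
    have : -r + -t = -(r + t) := by ring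
    rw [this] at h1
    exact stochLE_trans h1 hrl
  · have h1 : stochLE C (scaleM (Real.exp r) ν)
        (scaleM (Real.exp r) (scaleM (Real.exp t) lam)) :=
      stochLE_scale hCcone (Real.exp_pos _) htu
    rw [scaleM_scaleM, ← Real.exp_add] at h1
    exact stochLE_trans hru h1

end Aux

/-- `δ_T` satisfies the triangle inequality for boundedly supported probability measures
on an open convex cone `C` (whose closure is a proper cone). -/
theorem deltaT_triangle (C : Set E) (hCopen : IsOpen C) (hCconv : Convex ℝ C)
    (hCcone : ∀ x ∈ C, ∀ r : ℝ, 0 < r → r • x ∈ C)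
    (hCproper : closure C ∩ (-(closure C)) ⊆ {0})
    (μ ν lam : Measure E)
    [IsProbabilityMeasure μ] [IsProbabilityMeasure ν] [IsProbabilityMeasure lam]
    (hμC : μ C = 1) (hνC : ν C = 1) (hlamC : lam C = 1)
    (hμν : (thompsonSet C μ ν).Nonempty) (hνlam : (thompsonSet C ν lam).Nonempty) :
    deltaT C μ lam ≤ deltaT C μ ν + deltaT C ν lam := by
  have hbdd : BddBelow (thompsonSet C μ lam) := ⟨0, fun x hx => hx.1⟩
  refine le_of_forall_pos_le_add ?_
  intro ε hε
  obtain ⟨r, hr, hrlt⟩ := Real.lt_sInf_add_pos hμν (half_pos hε)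
  obtain ⟨t, ht, htlt⟩ := Real.lt_sInf_add_pos hνlam (half_pos hε)
  have hmem := thompsonSet_add hCcone hr ht
  have h1 : deltaT C μ lam ≤ r + t := csInf_le hbdd hmem
  have h2 : r + t ≤ deltaT C μ ν + deltaT C ν lam + ε := by
    unfold deltaT; linarith
  linarith
end

section
/- If a map β from boundedly supported probability measures on an open convex proper cone C to C is monotone with respect to the stochastic order and positively homogeneous (β(α.μ) = α β(μ) for α > 0), then β is contractive from δ_T to the Thompson metric: d_T(β(μ), β(ν)) ≤ δ_T(μ, ν). -/
open MeasureTheory Real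

variable {E : Type*} [NormedAddCommGroup E] [NormedSpace ℝ E]
  [MeasurableSpace E] [BorelSpace E]

/-- The Thompson metric on the cone `C`:
`d_T(x,y) = inf {r ≥ 0 : e^{-r} y ≤ x ≤ e^r y}`. -/
noncomputable def thompsonDist (C : Set E) (x y : E) : ℝ :=
  sInf {r : ℝ | 0 ≤ r ∧ coneLE C (exp (-r) • y) x ∧ coneLE C x (exp r • y)}

/-- A monotone, positively homogeneous map `β` from probability measures on an open convex
proper cone `C` into `C` is contractive from `δ_T` to the Thompson metric:
`d_T(β μ, β ν) ≤ δ_T(μ, ν)`. -/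
theorem monotone_homogeneous_contractive
    (C : Set E) (hCopen : IsOpen C) (hCconv : Convex ℝ C)
    (hCcone : ∀ x ∈ C, ∀ r : ℝ, 0 < r → r • x ∈ C)
    (hCproper : closure C ∩ (-(closure C)) ⊆ {0})
    (β : Measure E → E)
    (hβC : ∀ μ : Measure E, IsProbabilityMeasure μ → μ C = 1 → β μ ∈ C)
    (hβmono : ∀ μ ν : Measure E, IsProbabilityMeasure μ → IsProbabilityMeasure ν →
      stochLE C μ ν → coneLE C (β μ) (β ν))
    (hβhom : ∀ (μ : Measure E), IsProbabilityMeasure μ → ∀ α : ℝ, 0 < α →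
      β (scaleM α μ) = α • β μ)
    (μ ν : Measure E) [IsProbabilityMeasure μ] [IsProbabilityMeasure ν]
    (hμC : μ C = 1) (hνC : ν C = 1)
    (hne : (thompsonSet C μ ν).Nonempty) :
    thompsonDist C (β μ) (β ν) ≤ deltaT C μ ν := by
  apply csInf_le_csInf ⟨0, fun r hr => hr.1⟩ hne
  intro r hr
  obtain ⟨hr0, h1, h2⟩ := hr
  have hm : ∀ α : ℝ, 0 < α → IsProbabilityMeasure (scaleM α ν) := fun α hα =>
    Measure.isProbabilityMeasure_map (measurable_const_smul α).aemeasurable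
  refine ⟨hr0, ?_, ?_⟩
  · have h := hβmono _ _ (hm _ (exp_pos _)) inferInstance h1
    rwa [hβhom ν inferInstance _ (exp_pos _)] at h
  · have h := hβmono _ _ inferInstance (hm _ (exp_pos _)) h2
    rwa [hβhom ν inferInstance _ (exp_pos _)] at h
end

section
/- Let A and B be positive definite N×N matrices. Then the eigenvalues of the parallel sum satisfy the weak majorization λ(A:B) ≺_w λ(A) : λ(B), i.e., for every k ≤ N, the sum of the k largest eigenvalues of (A^{-1}+B^{-1})^{-1} is at most the sum over the k largest values of λ_i(A)λ_i(B)/(λ_i(A)+λ_i(B)), where eigenvalues are in decreasing order. -/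
open scoped ComplexOrder

/-- The eigenvalues of a Hermitian matrix, arranged in decreasing order
(junk value `0` if the matrix is not Hermitian). -/
noncomputable def eigDesc {N : ℕ} (A : Matrix (Fin N) (Fin N) ℂ) : Fin N → ℝ :=
  if h : A.IsHermitian then fun i => (h.eigenvalues ∘ ⇑(Tuple.sort h.eigenvalues)) i.rev
  else 0

/-!
Put `C = (A⁻¹ + B⁻¹)⁻¹`, so that `-C⁻¹ = -A⁻¹ + -B⁻¹`. For positive definite `X` we have
`λ_i(-X⁻¹) = -λ_i(X)⁻¹`, so Ky Fan's inequality
`∑_{i<k} λ_i(X + Y) ≤ ∑_{i<k} λ_i(X) + ∑_{i<k} λ_i(Y)` for `-A⁻¹` and `-B⁻¹` says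
`∑_{i<k} (λ_i(A)⁻¹ + λ_i(B)⁻¹) ≤ ∑_{i<k} λ_i(C)⁻¹` for every `k`. As `x ↦ x⁻¹` is convex and
decreasing, this turns into `∑_{i<k} λ_i(C) ≤ ∑_{i<k} (λ_i(A)⁻¹ + λ_i(B)⁻¹)⁻¹`: bound
`p⁻¹ ≤ q⁻¹ + p⁻² (q - p)` by the tangent line and sum by parts against the decreasing weights
`p_i⁻²`. Ky Fan's inequality comes from `∑_{j ∈ T} ⟪u_j, X u_j⟫ ≤ ∑_{i < #T} λ_i(X)` for
orthonormal `u_j`, with equality for eigenvectors.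
-/

open Finset Matrix

lemma inv_le_inv_add_inv_sq_mul_sub {p q : ℝ} (hp : 0 < p) (hq : 0 < q) :
    p⁻¹ ≤ q⁻¹ + p⁻¹ ^ 2 * (q - p) := by
  have key : q⁻¹ + p⁻¹ ^ 2 * (q - p) - p⁻¹ = (q - p) ^ 2 / (p ^ 2 * q) := by
    field_simp; ring
  have : 0 ≤ (q - p) ^ 2 / (p ^ 2 * q) := by positivity
  linarith

section PrefixSums

variable {N : ℕ}

lemma sum_filter_val_lt_succ {M : Type*} [AddCommMonoid M] (f : Fin N → M) {k : ℕ}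
    (hk : k < N) :
    ∑ i ∈ {i : Fin N | (i : ℕ) < k + 1}, f i =
      ∑ i ∈ {i : Fin N | (i : ℕ) < k}, f i + f ⟨k, hk⟩ := by
  have : ({i : Fin N | (i : ℕ) < k + 1} : Finset (Fin N)) =
      insert (⟨k, hk⟩ : Fin N) ({i : Fin N | (i : ℕ) < k} : Finset (Fin N)) := by
    ext i
    simp only [Order.lt_add_one_iff, mem_filter, mem_univ, true_and, mem_insert, Fin.ext_iff]
    omega
  rw [this, sum_insert (by simp), add_comm]

lemma card_filter_val_lt {k : ℕ} (hk : k ≤ N) : #{i : Fin N | (i : ℕ) < k} = k := by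
  have : ({i : Fin N | (i : ℕ) < k} : Finset (Fin N)).map Fin.valEmbedding = range k := by
    ext j
    simp only [mem_map, mem_filter, mem_univ, true_and, Fin.valEmbedding_apply, mem_range]
    exact ⟨fun ⟨_, hi, hij⟩ => hij ▸ hi, fun hj => ⟨⟨j, by omega⟩, hj, rfl⟩⟩
  rw [← card_map Fin.valEmbedding, this, card_range]

lemma sum_mul_le_sum_filter_of_antitone {c w : Fin N → ℝ} (hc : Antitone c)
    (hw0 : ∀ i, 0 ≤ w i) (hw1 : ∀ i, w i ≤ 1) {k : ℕ} (hw : ∑ i, w i = k) :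
    ∑ i, c i * w i ≤ ∑ i ∈ {i : Fin N | (i : ℕ) < k}, c i := by
  have hkN : k ≤ N := by
    have := sum_le_sum fun i (_ : i ∈ univ) => hw1 i
    simp only [hw, sum_const, card_univ, Fintype.card_fin, nsmul_eq_mul, mul_one] at this
    exact_mod_cast this
  rcases k with _ | m
  · have hw' : ∀ i ∈ univ, w i = 0 :=
      (sum_eq_zero_iff_of_nonneg fun i _ => hw0 i).1 (by simpa using hw)
    simp [sum_eq_zero fun i hi => show c i * w i = 0 by rw [hw' i hi, mul_zero]]
  -- Compare both sides with the threshold `θ = c_m`, which separates the first `m + 1` values.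
  set θ := c ⟨m, hkN⟩
  have hterm : ∀ i : Fin N, c i * w i ≤
      (if (i : ℕ) < m + 1 then c i else 0) + θ * (w i - if (i : ℕ) < m + 1 then 1 else 0) := by
    intro i
    split_ifs with hi
    · have : θ ≤ c i := hc (Fin.mk_le_mk.mpr (Nat.lt_succ_iff.mp hi))
      nlinarith [hw1 i]
    · have : c i ≤ θ := hc (Fin.mk_le_mk.mpr (by omega))
      nlinarith [hw0 i]
  calc ∑ i, c i * w i
      ≤ ∑ i : Fin N, ((if (i : ℕ) < m + 1 then c i else 0) +
          θ * (w i - if (i : ℕ) < m + 1 then 1 else 0)) := sum_le_sum fun i _ => hterm i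
    _ = ∑ i ∈ {i : Fin N | (i : ℕ) < m + 1}, c i +
          θ * (∑ i, w i - #({i : Fin N | (i : ℕ) < m + 1} : Finset (Fin N))) := by
        rw [sum_add_distrib, ← mul_sum, sum_sub_distrib, ← sum_filter, sum_boole]
    _ = ∑ i ∈ {i : Fin N | (i : ℕ) < m + 1}, c i := by
        rw [hw, card_filter_val_lt hkN]; ring

lemma sum_filter_mul_nonpos_of_antitone {s d : Fin N → ℝ} (hs : Antitone s) (hs0 : ∀ i, 0 ≤ s i)
    (hd : ∀ k ≤ N, ∑ i ∈ {i : Fin N | (i : ℕ) < k}, d i ≤ 0) {k : ℕ} (hk : k ≤ N) :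
    ∑ i ∈ {i : Fin N | (i : ℕ) < k}, s i * d i ≤ 0 := by
  -- Abel summation, as an induction on `k` carrying a lower bound `θ` of the weights used so far.
  suffices h : ∀ θ, (∀ i : Fin N, (i : ℕ) < k → θ ≤ s i) →
      ∑ i ∈ {i : Fin N | (i : ℕ) < k}, s i * d i ≤ θ * ∑ i ∈ {i : Fin N | (i : ℕ) < k}, d i by
    simpa using h 0 fun i _ => hs0 i
  induction k with
  | zero => simp
  | succ k ih =>
    intro θ hθ
    have hkN : k < N := hk
    have hsk : ∀ i : Fin N, (i : ℕ) < k → s ⟨k, hkN⟩ ≤ s i :=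
      fun i hi => hs (Fin.mk_le_mk.mpr hi.le)
    calc ∑ i ∈ {i : Fin N | (i : ℕ) < k + 1}, s i * d i
        ≤ s ⟨k, hkN⟩ * ∑ i ∈ {i : Fin N | (i : ℕ) < k}, d i + s ⟨k, hkN⟩ * d ⟨k, hkN⟩ := by
          rw [sum_filter_val_lt_succ _ hkN]
          linarith [ih hkN.le _ hsk]
      _ = s ⟨k, hkN⟩ * ∑ i ∈ {i : Fin N | (i : ℕ) < k + 1}, d i := by
          rw [sum_filter_val_lt_succ _ hkN, mul_add]
      _ ≤ θ * ∑ i ∈ {i : Fin N | (i : ℕ) < k + 1}, d i :=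
          mul_le_mul_of_nonpos_right (hθ _ (Nat.lt_succ_self k)) (hd _ hk)

theorem sum_filter_inv_le_of_sum_filter_le {p q : Fin N → ℝ} (hp : Monotone p)
    (hp0 : ∀ i, 0 < p i) (hq0 : ∀ i, 0 < q i)
    (hpq : ∀ k ≤ N, ∑ i ∈ {i : Fin N | (i : ℕ) < k}, q i ≤ ∑ i ∈ {i : Fin N | (i : ℕ) < k}, p i)
    {k : ℕ} (hk : k ≤ N) :
    ∑ i ∈ {i : Fin N | (i : ℕ) < k}, (p i)⁻¹ ≤ ∑ i ∈ {i : Fin N | (i : ℕ) < k}, (q i)⁻¹ := by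
  have habel : ∑ i ∈ {i : Fin N | (i : ℕ) < k}, (p i)⁻¹ ^ 2 * (q i - p i) ≤ 0 := by
    refine sum_filter_mul_nonpos_of_antitone ?_ (fun i => sq_nonneg _) ?_ hk
    · exact fun i j hij => pow_le_pow_left₀ (by have := hp0 j; positivity)
        (inv_anti₀ (hp0 i) (hp hij)) 2
    · intro k hk
      rw [sum_sub_distrib]
      linarith [hpq k hk]
  calc ∑ i ∈ {i : Fin N | (i : ℕ) < k}, (p i)⁻¹
      ≤ ∑ i ∈ {i : Fin N | (i : ℕ) < k}, ((q i)⁻¹ + (p i)⁻¹ ^ 2 * (q i - p i)) :=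
        sum_le_sum fun i _ => inv_le_inv_add_inv_sq_mul_sub (hp0 i) (hq0 i)
    _ ≤ ∑ i ∈ {i : Fin N | (i : ℕ) < k}, (q i)⁻¹ := by
        rw [sum_add_distrib]; linarith

end PrefixSums

section UnitaryConj

variable {𝕜 n : Type*} [RCLike 𝕜] [Fintype n] [DecidableEq n]

lemma sum_norm_sq_apply_col {U : Matrix n n 𝕜} (hU : U ∈ unitaryGroup n 𝕜) (j : n) :
    ∑ i, ‖U i j‖ ^ 2 = 1 := by
  have h := congrFun₂ ((mem_unitaryGroup_iff').mp hU) j j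
  simp only [mul_apply, star_apply, RCLike.star_def, RCLike.conj_mul, one_apply_eq] at h
  exact_mod_cast h

lemma sum_norm_sq_apply_row {U : Matrix n n 𝕜} (hU : U ∈ unitaryGroup n 𝕜) (i : n) :
    ∑ j, ‖U i j‖ ^ 2 = 1 := by
  simpa using sum_norm_sq_apply_col (Unitary.star_mem hU) i

lemma re_star_mul_diagonal_mul_apply_self (P : Matrix n n 𝕜) (d : n → ℝ) (j : n) :
    RCLike.re ((star P * diagonal (RCLike.ofReal ∘ d) * P : Matrix n n 𝕜) j j) =
      ∑ i, d i * ‖P i j‖ ^ 2 := by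
  rw [Matrix.mul_assoc, mul_apply, map_sum]
  refine sum_congr rfl fun i _ => ?_
  rw [diagonal_mul, star_apply, Function.comp_apply, RCLike.star_def, mul_left_comm,
    RCLike.conj_mul]
  norm_cast

end UnitaryConj

section EigDesc

variable {N : ℕ}

lemma eigDesc_eq_eigenvalues_comp {A : Matrix (Fin N) (Fin N) ℂ} (hA : A.IsHermitian) :
    eigDesc A = hA.eigenvalues ∘ (Fin.revPerm.trans (Tuple.sort hA.eigenvalues)) := by
  rw [eigDesc, dif_pos hA]; rfl

lemma antitone_eigDesc {A : Matrix (Fin N) (Fin N) ℂ} (hA : A.IsHermitian) :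
    Antitone (eigDesc A) := by
  rw [eigDesc_eq_eigenvalues_comp hA]
  exact fun i j hij => Tuple.monotone_sort _ (Fin.rev_le_rev.mpr hij)

lemma eigDesc_pos {A : Matrix (Fin N) (Fin N) ℂ} (hA : A.PosDef) (i : Fin N) :
    0 < eigDesc A i := by
  rw [eigDesc_eq_eigenvalues_comp hA.isHermitian]
  exact hA.eigenvalues_pos _

open Polynomial in
lemma eigDesc_eq_of_charpoly_eq {A : Matrix (Fin N) (Fin N) ℂ} (hA : A.IsHermitian)
    {d : Fin N → ℝ} (hd : A.charpoly = ∏ i, (X - C (d i : ℂ)))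
    {σ : Equiv.Perm (Fin N)} (hσ : Antitone (d ∘ σ)) : eigDesc A = d ∘ σ := by
  have roots_eq (f : Fin N → ℝ) : (∏ i, (X - C (f i : ℂ))).roots = (univ.val.map f).map (↑) := by
    rw [roots_prod _ _ (prod_ne_zero_iff.mpr fun i _ => X_sub_C_ne_zero _), Multiset.map_map]
    simp
  have hperm : (List.ofFn hA.eigenvalues).Perm (List.ofFn d) := by
    rw [← Multiset.coe_eq_coe, ← Fin.univ_val_map, ← Fin.univ_val_map]
    apply Multiset.map_injective Complex.ofReal_injective
    rw [← roots_eq, ← roots_eq, ← hd, hA.charpoly_eq]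
    rfl
  have hanti := antitone_eigDesc hA
  rw [eigDesc_eq_eigenvalues_comp hA] at hanti ⊢
  refine List.ofFn_injective (List.Perm.eq_of_sortedGE hanti.sortedGE_ofFn hσ.sortedGE_ofFn ?_)
  exact ((Equiv.Perm.ofFn_comp_perm _ _).trans hperm).trans (Equiv.Perm.ofFn_comp_perm _ _).symm

-- `x ↦ -x⁻¹` is increasing on positive reals, so it keeps the decreasing order of the eigenvalues.
lemma eigDesc_neg_inv {A : Matrix (Fin N) (Fin N) ℂ} (hA : A.PosDef) :
    eigDesc (-A⁻¹) = fun i => -(eigDesc A i)⁻¹ := by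
  have hcfc : cfc (fun t : ℝ => -t⁻¹) A = -A⁻¹ := by
    rw [cfc_neg, cfc_ringInverse_id _ hA.isUnit hA.isHermitian.isSelfAdjoint,
      nonsing_inv_eq_ringInverse]
  have hcomp : (fun i => -(hA.isHermitian.eigenvalues i)⁻¹) ∘
      (Fin.revPerm.trans (Tuple.sort hA.isHermitian.eigenvalues)) =
        fun i => -(eigDesc A i)⁻¹ := by
    rw [eigDesc_eq_eigenvalues_comp hA.isHermitian]; rfl
  rw [← hcomp]
  refine eigDesc_eq_of_charpoly_eq hA.inv.isHermitian.neg ?_ ?_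
  · rw [← hcfc, hA.isHermitian.charpoly_cfc_eq]; rfl
  · rw [hcomp]
    exact fun i j hij =>
      neg_le_neg (inv_anti₀ (eigDesc_pos hA j) (antitone_eigDesc hA.isHermitian hij))

end EigDesc

section KyFan

variable {N : ℕ}

lemma sum_re_diag_conj_le_sum_eigDesc {A U : Matrix (Fin N) (Fin N) ℂ} (hA : A.IsHermitian)
    (hU : U ∈ unitaryGroup (Fin N) ℂ) (T : Finset (Fin N)) :
    ∑ j ∈ T, ((star U * A * U) j j).re ≤ ∑ i ∈ {i : Fin N | (i : ℕ) < #T}, eigDesc A i := by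
  set P : Matrix (Fin N) (Fin N) ℂ := star (hA.eigenvectorUnitary : Matrix (Fin N) (Fin N) ℂ) * U
  have hP : P ∈ unitaryGroup (Fin N) ℂ := mul_mem (Unitary.star_mem hA.eigenvectorUnitary.2) hU
  have hconj : star U * A * U = star P * diagonal (RCLike.ofReal ∘ hA.eigenvalues) * P := by
    conv_lhs => rw [hA.spectral_theorem]
    simp [P, star_mul, Matrix.mul_assoc]
  set w : Fin N → ℝ := fun i => ∑ j ∈ T, ‖P i j‖ ^ 2
  have hw : ∑ j ∈ T, ((star U * A * U) j j).re = ∑ i, hA.eigenvalues i * w i := by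
    simp_rw [hconj, ← RCLike.re_to_complex, re_star_mul_diagonal_mul_apply_self, w, mul_sum]
    exact sum_comm
  set τ := Fin.revPerm.trans (Tuple.sort hA.eigenvalues)
  have hτ : ∀ i, hA.eigenvalues (τ i) = eigDesc A i := by simp [eigDesc_eq_eigenvalues_comp hA, τ]
  rw [hw, ← Equiv.sum_comp τ]
  simp only [hτ]
  refine sum_mul_le_sum_filter_of_antitone (antitone_eigDesc hA)
    (fun i => sum_nonneg fun j _ => by positivity) (fun i => ?_) ?_
  · calc w (τ i) ≤ ∑ j, ‖P (τ i) j‖ ^ 2 :=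
          sum_le_sum_of_subset_of_nonneg (subset_univ T) fun j _ _ => by positivity
      _ = 1 := sum_norm_sq_apply_row hP _
  · rw [Equiv.sum_comp τ w, sum_comm]
    simp [sum_norm_sq_apply_col hP]

lemma exists_sum_eigDesc_eq_sum_re_diag_conj {A : Matrix (Fin N) (Fin N) ℂ} (hA : A.IsHermitian)
    (S : Finset (Fin N)) :
    ∃ T : Finset (Fin N), #T = #S ∧ ∑ i ∈ S, eigDesc A i =
      ∑ j ∈ T, ((star (hA.eigenvectorUnitary : Matrix (Fin N) (Fin N) ℂ) * A *
        (hA.eigenvectorUnitary : Matrix (Fin N) (Fin N) ℂ)) j j).re := by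
  set τ := Fin.revPerm.trans (Tuple.sort hA.eigenvalues)
  refine ⟨S.map τ.toEmbedding, card_map _, ?_⟩
  have hdiag := hA.conjStarAlgAut_star_eigenvectorUnitary
  rw [Unitary.conjStarAlgAut_star_apply] at hdiag
  simp [hdiag, eigDesc_eq_eigenvalues_comp hA, τ]

theorem sum_eigDesc_add_le {A B : Matrix (Fin N) (Fin N) ℂ} (hA : A.IsHermitian)
    (hB : B.IsHermitian) {k : ℕ} (hk : k ≤ N) :
    ∑ i ∈ {i : Fin N | (i : ℕ) < k}, eigDesc (A + B) i ≤
      ∑ i ∈ {i : Fin N | (i : ℕ) < k}, eigDesc A i +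
        ∑ i ∈ {i : Fin N | (i : ℕ) < k}, eigDesc B i := by
  obtain ⟨T, hT, hsum⟩ := exists_sum_eigDesc_eq_sum_re_diag_conj (hA.add hB) {i | (i : ℕ) < k}
  rw [card_filter_val_lt hk] at hT
  set U : Matrix (Fin N) (Fin N) ℂ := ((hA.add hB).eigenvectorUnitary : Matrix (Fin N) (Fin N) ℂ)
  have hU : U ∈ unitaryGroup (Fin N) ℂ := (hA.add hB).eigenvectorUnitary.2
  calc ∑ i ∈ {i : Fin N | (i : ℕ) < k}, eigDesc (A + B) i
      = ∑ j ∈ T, ((star U * A * U) j j).re + ∑ j ∈ T, ((star U * B * U) j j).re := by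
        simp [hsum, U, Matrix.mul_add, Matrix.add_mul, sum_add_distrib]
    _ ≤ _ := hT ▸ add_le_add (sum_re_diag_conj_le_sum_eigDesc hA hU T)
        (sum_re_diag_conj_le_sum_eigDesc hB hU T)

end KyFan

/-- For positive definite `A`, `B`, the eigenvalues of the parallel sum
`A : B = (A⁻¹ + B⁻¹)⁻¹` are weakly majorized by the coordinatewise parallel sum of the
decreasing eigenvalue vectors: for every `k ≤ N`,
`∑_{i<k} λ_i(A:B) ≤ ∑_{i<k} λ_i(A) λ_i(B) / (λ_i(A) + λ_i(B))`. -/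
theorem eig_parallel_sum_weak_majorization
    (N : ℕ) (A B : Matrix (Fin N) (Fin N) ℂ) (hA : A.PosDef) (hB : B.PosDef) :
    ∀ k : ℕ, k ≤ N →
      ∑ i ∈ Finset.univ.filter (fun i : Fin N => (i : ℕ) < k),
          eigDesc ((A⁻¹ + B⁻¹)⁻¹) i ≤
      ∑ i ∈ Finset.univ.filter (fun i : Fin N => (i : ℕ) < k),
          eigDesc A i * eigDesc B i / (eigDesc A i + eigDesc B i) := by
  intro k hk
  have hC : ((A⁻¹ + B⁻¹)⁻¹).PosDef := (hA.inv.add hB.inv).inv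
  have hCinv : -((A⁻¹ + B⁻¹)⁻¹)⁻¹ = -A⁻¹ + -B⁻¹ := by
    rw [nonsing_inv_nonsing_inv _ ((isUnit_iff_isUnit_det _).mp (hA.inv.add hB.inv).isUnit),
      neg_add]
  have hKyFan : ∀ k ≤ N, ∑ i ∈ {i : Fin N | (i : ℕ) < k}, ((eigDesc A i)⁻¹ + (eigDesc B i)⁻¹) ≤
      ∑ i ∈ {i : Fin N | (i : ℕ) < k}, (eigDesc ((A⁻¹ + B⁻¹)⁻¹) i)⁻¹ := by
    intro k hk
    have h := sum_eigDesc_add_le hA.inv.isHermitian.neg hB.inv.isHermitian.neg hk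
    rw [← hCinv, eigDesc_neg_inv hC, eigDesc_neg_inv hA, eigDesc_neg_inv hB] at h
    simp only [sum_neg_distrib, sum_add_distrib] at h ⊢
    linarith
  have hpos (i : Fin N) : 0 < (eigDesc A i)⁻¹ + (eigDesc B i)⁻¹ := by
    have := eigDesc_pos hA i; have := eigDesc_pos hB i; positivity
  have h := sum_filter_inv_le_of_sum_filter_le
    (fun i j hij => inv_anti₀ (eigDesc_pos hC j) (antitone_eigDesc hC.isHermitian hij))
    (fun i => inv_pos.mpr (eigDesc_pos hC i)) hpos hKyFan hk
  convert h using 2 with i _ i _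
  · rw [inv_inv]
  · rw [inv_add_inv (eigDesc_pos hA i).ne' (eigDesc_pos hB i).ne', inv_div]
end

section
/- Let σ be a Kubo-Ando operator mean whose representing function f_σ is geometrically convex (f_σ(√(xy)) ≤ √(f_σ(x) f_σ(y)) for all x, y > 0). Then for positive semidefinite N×N matrices A, B, det^{1/N}(A σ B) ≥ (det^{1/N} A) σ (det^{1/N} B), where for nonnegative scalars a σ b = a f_σ(b/a) (extended by continuity). The reverse inequality holds when f_σ is geometrically concave. -/
/-!
Let `C = A^{-1/2} B A^{-1/2}`, with eigenvalues `μ₁, …, μ_N > 0`. Since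
`A σ B = A^{1/2} f(C) A^{1/2}`, `det (A σ B) = det A · ∏ f(μᵢ)` and `det B = det A · ∏ μᵢ`;
after cancelling `(det A)^{1/N}` the two inequalities read `f(∏ μᵢ^{1/N}) ≤ ∏ f(μᵢ)^{1/N}`
and its reverse. This is Jensen's inequality with equal weights for the midpoint convex
(resp. concave) function `s ↦ log f(eˢ)` at `sᵢ = log μᵢ`, and midpoint convexity is enough
for it (Cauchy): halving gives the case of `2^k` points, and padding `n ≤ 2^k` points with
copies of their mean reduces to that case.
-/

open scoped ComplexOrder

/-- The positive square root `A^{1/2}` via the continuous functional calculus. -/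
noncomputable def rsqrt {N : ℕ} (A : Matrix (Fin N) (Fin N) ℂ) : Matrix (Fin N) (Fin N) ℂ :=
  cfc Real.sqrt A

/-- The inverse square root `A^{-1/2}` via the continuous functional calculus. -/
noncomputable def risqrt {N : ℕ} (A : Matrix (Fin N) (Fin N) ℂ) : Matrix (Fin N) (Fin N) ℂ :=
  cfc (fun x : ℝ => (Real.sqrt x)⁻¹) A

open Finset

theorem map_average_le_of_midpoint_convex_two_pow {g : ℝ → ℝ}
    (hg : ∀ s t, g ((s + t) / 2) ≤ (g s + g t) / 2) (k : ℕ) (t : ℕ → ℝ) :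
    g ((∑ i ∈ range (2 ^ k), t i) / (2 ^ k : ℕ)) ≤
      (∑ i ∈ range (2 ^ k), g (t i)) / (2 ^ k : ℕ) := by
  induction k generalizing t with
  | zero => simp
  | succ k ih =>
    have halves (u : ℕ → ℝ) : (∑ i ∈ range (2 ^ (k + 1)), u i) / (2 ^ (k + 1) : ℕ) =
        ((∑ i ∈ range (2 ^ k), u i) / (2 ^ k : ℕ) +
          (∑ i ∈ range (2 ^ k), u (2 ^ k + i)) / (2 ^ k : ℕ)) / 2 := by
      rw [pow_succ, mul_two, sum_range_add]; push_cast; ring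
    rw [halves t, halves fun i => g (t i)]
    exact (hg _ _).trans (by gcongr <;> apply ih)

theorem map_average_le_of_midpoint_convex_range {g : ℝ → ℝ}
    (hg : ∀ s t, g ((s + t) / 2) ≤ (g s + g t) / 2) {n : ℕ} (hn : 0 < n) (t : ℕ → ℝ) :
    g ((∑ i ∈ range n, t i) / n) ≤ (∑ i ∈ range n, g (t i)) / n := by
  set M := (∑ i ∈ range n, t i) / n with hM
  obtain ⟨m, hm⟩ := Nat.exists_eq_add_of_le (Nat.lt_two_pow_self (n := n)).le
  have key := map_average_le_of_midpoint_convex_two_pow hg n fun i => if i < n then t i else M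
  simp only [hm, sum_range_add, apply_ite g, sum_ite_of_true fun _ => mem_range.1,
    add_lt_iff_neg_left, not_lt_zero, if_false, sum_const, card_range, nsmul_eq_mul] at key
  have hsum : ∑ i ∈ range n, t i = n * M := by rw [hM]; field_simp
  rw [hsum, Nat.cast_add, ← add_mul, mul_div_cancel_left₀ _ (by positivity)] at key
  rw [le_div_iff₀ (by positivity)] at key ⊢
  linarith

theorem map_average_le_of_midpoint_convex {ι : Type*} [Fintype ι] [Nonempty ι] {g : ℝ → ℝ}
    (hg : ∀ s t, g ((s + t) / 2) ≤ (g s + g t) / 2) (t : ι → ℝ) :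
    g ((∑ i, t i) / Fintype.card ι) ≤ (∑ i, g (t i)) / Fintype.card ι := by
  let e := Fintype.equivFin ι
  let u : ℕ → ℝ := fun k => if h : k < Fintype.card ι then t (e.symm ⟨k, h⟩) else 0
  have hsum (φ : ℝ → ℝ) : ∑ i, φ (t i) = ∑ k ∈ range (Fintype.card ι), φ (u k) := by
    rw [sum_range, ← e.symm.sum_comp]
    simp [u]
  rw [show ∑ i, t i = _ from hsum id, hsum g]
  exact map_average_le_of_midpoint_convex_range hg Fintype.card_pos u

theorem sqrt_exp_mul_exp (s t : ℝ) : √(Real.exp s * Real.exp t) = Real.exp ((s + t) / 2) := by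
  rw [← Real.exp_add, Real.sqrt_eq_iff_mul_self_eq_of_pos (Real.exp_pos _), ← Real.exp_add,
    add_halves]

theorem log_comp_exp_midpoint_le {f : ℝ → ℝ} (hpos : ∀ x, 0 < x → 0 < f x)
    (hf : ∀ x y, 0 < x → 0 < y → f √(x * y) ≤ √(f x * f y)) (s t : ℝ) :
    Real.log (f (Real.exp ((s + t) / 2))) ≤
      (Real.log (f (Real.exp s)) + Real.log (f (Real.exp t))) / 2 := by
  have hs := hpos _ (Real.exp_pos s)
  have ht := hpos _ (Real.exp_pos t)
  rw [← Real.log_mul hs.ne' ht.ne', ← Real.log_sqrt (by positivity), ← sqrt_exp_mul_exp]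
  exact Real.log_le_log (hpos _ (by positivity)) (hf _ _ (Real.exp_pos s) (Real.exp_pos t))

theorem map_geom_mean_le_of_geom_convex {ι : Type*} [Fintype ι] [Nonempty ι] {f : ℝ → ℝ}
    (hpos : ∀ x, 0 < x → 0 < f x) (hf : ∀ x y, 0 < x → 0 < y → f √(x * y) ≤ √(f x * f y))
    {x : ι → ℝ} (hx : ∀ i, 0 < x i) :
    f ((∏ i, x i) ^ (Fintype.card ι : ℝ)⁻¹) ≤ (∏ i, f (x i)) ^ (Fintype.card ι : ℝ)⁻¹ := by
  have hfx i : 0 < f (x i) := hpos _ (hx i)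
  have hprod : 0 < ∏ i, x i := prod_pos fun i _ => hx i
  have hfprod : 0 < ∏ i, f (x i) := prod_pos fun i _ => hfx i
  have key := map_average_le_of_midpoint_convex (g := fun s => Real.log (f (Real.exp s)))
    (log_comp_exp_midpoint_le hpos hf) fun i => Real.log (x i)
  simp only [Real.exp_log (hx _)] at key
  rw [← Real.log_prod fun i _ => (hx i).ne', ← Real.log_prod fun i _ => (hfx i).ne'] at key
  rw [← Real.log_le_log_iff (hpos _ (by positivity)) (by positivity), Real.log_rpow hfprod,
    Real.rpow_def_of_pos hprod]
  simpa only [div_eq_mul_inv, mul_comm _ (Fintype.card ι : ℝ)⁻¹] using key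

/-- Reduced to the convex case: `x ↦ (f x)⁻¹` is geometrically convex. -/
theorem geom_mean_map_le_of_geom_concave {ι : Type*} [Fintype ι] [Nonempty ι] {f : ℝ → ℝ}
    (hpos : ∀ x, 0 < x → 0 < f x) (hf : ∀ x y, 0 < x → 0 < y → √(f x * f y) ≤ f √(x * y))
    {x : ι → ℝ} (hx : ∀ i, 0 < x i) :
    (∏ i, f (x i)) ^ (Fintype.card ι : ℝ)⁻¹ ≤ f ((∏ i, x i) ^ (Fintype.card ι : ℝ)⁻¹) := by
  have hinv : ∀ x y, 0 < x → 0 < y → (f √(x * y))⁻¹ ≤ √((f x)⁻¹ * (f y)⁻¹) := by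
    intro x y hx hy
    rw [← mul_inv, Real.sqrt_inv]
    exact inv_anti₀ (Real.sqrt_pos.2 (mul_pos (hpos x hx) (hpos y hy))) (hf x y hx hy)
  have hprod : 0 < ∏ i, x i := prod_pos fun i _ => hx i
  have hfprod : 0 < ∏ i, f (x i) := prod_pos fun i _ => hpos _ (hx i)
  have key := map_geom_mean_le_of_geom_convex (f := fun x => (f x)⁻¹)
    (fun x hx => inv_pos.2 (hpos x hx)) hinv hx
  rw [prod_inv_distrib, Real.inv_rpow hfprod.le] at key
  exact (inv_le_inv₀ (hpos _ (by positivity)) (by positivity)).1 key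

namespace Matrix

variable {n 𝕜 : Type*} [Fintype n] [DecidableEq n] [RCLike 𝕜]

theorem IsHermitian.det_cfc {X : Matrix n n 𝕜} (hX : X.IsHermitian) (g : ℝ → ℝ) :
    (cfc g X).det = ∏ i, (g (hX.eigenvalues i) : 𝕜) := by
  rw [hX.cfc_eq, IsHermitian.cfc, Unitary.conjStarAlgAut_apply, det_mul, det_mul, mul_right_comm,
    ← det_mul, Unitary.mul_star_self_of_mem hX.eigenvectorUnitary.2, det_one, one_mul,
    det_diagonal]
  rfl

theorem PosDef.pos_of_mem_spectrum {A : Matrix n n 𝕜} (hA : A.PosDef) {x : ℝ}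
    (hx : x ∈ spectrum ℝ A) : 0 < x := by
  obtain ⟨i, rfl⟩ := hA.1.spectrum_real_eq_range_eigenvalues ▸ hx
  exact hA.eigenvalues_pos i

end Matrix

open Matrix

section SquareRoots

variable {N : ℕ} {A : Matrix (Fin N) (Fin N) ℂ}

theorem isHermitian_risqrt : (risqrt A).IsHermitian :=
  cfc_predicate _ A

theorem rsqrt_mul_rsqrt (hA : A.PosDef) : rsqrt A * rsqrt A = A := by
  rw [rsqrt, ← cfc_mul ..]
  conv_rhs => rw [← cfc_id' ℝ A hA.1.isSelfAdjoint]
  exact cfc_congr fun x hx => Real.mul_self_sqrt (hA.pos_of_mem_spectrum hx).le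

theorem risqrt_mul_rsqrt (hA : A.PosDef) : risqrt A * rsqrt A = 1 := by
  rw [risqrt, rsqrt, ← cfc_mul _ _ _ (A.finite_real_spectrum.continuousOn _),
    ← cfc_one ℝ A hA.1.isSelfAdjoint]
  exact cfc_congr fun x hx => inv_mul_cancel₀ (Real.sqrt_pos.2 (hA.pos_of_mem_spectrum hx)).ne'

theorem Matrix.PosDef.risqrt_mul_mul_risqrt (hA : A.PosDef) {B : Matrix (Fin N) (Fin N) ℂ}
    (hB : B.PosDef) : (risqrt A * B * risqrt A).PosDef := by
  have hM : IsUnit (risqrt A) := .of_mul_eq_one _ (risqrt_mul_rsqrt hA)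
  have := hM.posDef_star_left_conjugate_iff.2 hB
  rwa [isHermitian_risqrt.isSelfAdjoint.star_eq] at this

theorem det_rsqrt_mul_mul_rsqrt (hA : A.PosDef) (X : Matrix (Fin N) (Fin N) ℂ) :
    (rsqrt A * X * rsqrt A).det = A.det * X.det := by
  rw [← congrArg det (rsqrt_mul_rsqrt hA), det_mul, det_mul, det_mul]
  ring

theorem det_mul_det_risqrt_mul_mul_risqrt (hA : A.PosDef) (B : Matrix (Fin N) (Fin N) ℂ) :
    A.det * (risqrt A * B * risqrt A).det = B.det := by
  have hunit : (risqrt A).det * (rsqrt A).det = 1 := by rw [← det_mul, risqrt_mul_rsqrt hA, det_one]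
  calc A.det * (risqrt A * B * risqrt A).det
      = ((risqrt A).det * (rsqrt A).det) ^ 2 * B.det := by
        rw [← congrArg det (rsqrt_mul_rsqrt hA), det_mul, det_mul, det_mul]; ring
    _ = B.det := by rw [hunit, one_pow, one_mul]

end SquareRoots

theorem det_root_operator_mean_general
    (N : ℕ) (hN : 0 < N) (f : ℝ → ℝ)
    (hpos : ∀ x : ℝ, 0 < x → 0 < f x)
    (σ : Matrix (Fin N) (Fin N) ℂ → Matrix (Fin N) (Fin N) ℂ → Matrix (Fin N) (Fin N) ℂ)
    (hσ : ∀ X Y : Matrix (Fin N) (Fin N) ℂ, X.PosDef → Y.PosDef →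
      σ X Y = rsqrt X * cfc f (risqrt X * Y * risqrt X) * rsqrt X)
    (A B : Matrix (Fin N) (Fin N) ℂ) (hA : A.PosDef) (hB : B.PosDef) :
    ((∀ x y : ℝ, 0 < x → 0 < y → f (Real.sqrt (x * y)) ≤ Real.sqrt (f x * f y)) →
      A.det.re ^ ((N : ℝ)⁻¹) *
          f (B.det.re ^ ((N : ℝ)⁻¹) / A.det.re ^ ((N : ℝ)⁻¹)) ≤
        (σ A B).det.re ^ ((N : ℝ)⁻¹)) ∧
    ((∀ x y : ℝ, 0 < x → 0 < y → Real.sqrt (f x * f y) ≤ f (Real.sqrt (x * y))) →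
      (σ A B).det.re ^ ((N : ℝ)⁻¹) ≤
        A.det.re ^ ((N : ℝ)⁻¹) *
          f (B.det.re ^ ((N : ℝ)⁻¹) / A.det.re ^ ((N : ℝ)⁻¹))) := by
  have : Nonempty (Fin N) := ⟨⟨0, hN⟩⟩
  have hC := hA.risqrt_mul_mul_risqrt hB
  set μ := hC.1.eigenvalues
  have hμ i : 0 < μ i := hC.eigenvalues_pos i
  have ha : 0 < A.det.re := (Complex.pos_iff.1 hA.det_pos).1
  have hdetB : B.det.re = A.det.re * ∏ i, μ i := by
    rw [← det_mul_det_risqrt_mul_mul_risqrt hA B, hC.1.det_eq_prod_eigenvalues,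
      ← RCLike.ofReal_prod]
    exact Complex.re_mul_ofReal _ _
  have hdetσ : (σ A B).det.re = A.det.re * ∏ i, f (μ i) := by
    rw [hσ A B hA hB, det_rsqrt_mul_mul_rsqrt hA, hC.1.det_cfc, ← RCLike.ofReal_prod]
    exact Complex.re_mul_ofReal _ _
  have hroot := Real.rpow_pos_of_pos ha (N : ℝ)⁻¹
  rw [hdetB, hdetσ, Real.mul_rpow ha.le (prod_pos fun i _ => hμ i).le,
    Real.mul_rpow ha.le (prod_pos fun i _ => (hpos _ (hμ i))).le, mul_div_cancel_left₀ _ hroot.ne']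
  have hcard : (Fintype.card (Fin N) : ℝ) = N := by rw [Fintype.card_fin]
  refine ⟨fun hf => ?_, fun hf => ?_⟩
  · exact mul_le_mul_of_nonneg_left (hcard ▸ map_geom_mean_le_of_geom_convex hpos hf hμ) hroot.le
  · exact mul_le_mul_of_nonneg_left (hcard ▸ geom_mean_map_le_of_geom_concave hpos hf hμ) hroot.le

/-- Let `σ` be a Kubo–Ando operator mean with representing operator monotone function `f`.
If `f` is geometrically convex, then `det^{1/N}(A σ B) ≥ (det^{1/N} A) σ (det^{1/N} B)`
for positive matrices `A, B`, where on scalars `a σ b = a f(b/a)`; the reverse inequality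
holds if `f` is geometrically concave. -/
theorem det_root_operator_mean
    (N : ℕ) (hN : 0 < N) (f : ℝ → ℝ)
    (hcont : ContinuousOn f (Set.Ioi (0 : ℝ)))
    (hpos : ∀ x : ℝ, 0 < x → 0 < f x)
    (hopmono : ∀ (n : ℕ) (X Y : Matrix (Fin n) (Fin n) ℂ), X.PosDef → Y.PosDef →
      (Y - X).PosSemidef → (cfc f Y - cfc f X).PosSemidef)
    (hf1 : f 1 = 1)
    (σ : Matrix (Fin N) (Fin N) ℂ → Matrix (Fin N) (Fin N) ℂ → Matrix (Fin N) (Fin N) ℂ)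
    (hσ : ∀ X Y : Matrix (Fin N) (Fin N) ℂ, X.PosDef → Y.PosDef →
      σ X Y = rsqrt X * cfc f (risqrt X * Y * risqrt X) * rsqrt X)
    (A B : Matrix (Fin N) (Fin N) ℂ) (hA : A.PosDef) (hB : B.PosDef) :
    ((∀ x y : ℝ, 0 < x → 0 < y → f (Real.sqrt (x * y)) ≤ Real.sqrt (f x * f y)) →
      A.det.re ^ ((N : ℝ)⁻¹) *
          f (B.det.re ^ ((N : ℝ)⁻¹) / A.det.re ^ ((N : ℝ)⁻¹)) ≤
        (σ A B).det.re ^ ((N : ℝ)⁻¹)) ∧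
    ((∀ x y : ℝ, 0 < x → 0 < y → Real.sqrt (f x * f y) ≤ f (Real.sqrt (x * y))) →
      (σ A B).det.re ^ ((N : ℝ)⁻¹) ≤
        A.det.re ^ ((N : ℝ)⁻¹) *
          f (B.det.re ^ ((N : ℝ)⁻¹) / A.det.re ^ ((N : ℝ)⁻¹))) :=
  det_root_operator_mean_general N hN f hpos σ hσ A B hA hB
end
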